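/- Let k > 0 and δ ∈ (0,1]. Suppose w : [0,1] → ℝ is twice continuously differentiable and ζ : [0,1] → ℝ is continuous, with w(0) = w(1) = 0, ζ(0) = ζ(1) = 0, and w''(z) − k² w(z) = k ζ(z) for all z ∈ [0,1], and suppose T : [0,1] → ℝ is continuously differentiable with T(0) = 0. Then ∫₀^δ |w(z) T(z)| dz ≤ (2c₁/5) k^{1/2} δ^{5/2} (∫₀¹ ζ² dz)^{1/2} (∫₀¹ T'² dz)^{1/2}, where c₁ := 3^{3/4}/2^{3/2}. -/

import Mathlib

/-!
Integrating over `[0, δ]` the product of two pointwise bounds, `w(z)² ≤ (5/8) k z² ‖ζ‖₂²` and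
`T(z)² ≤ z ‖T'‖₂²`, gives the estimate, because `5/8 ≤ c₁²`.

The bound on `w` comes from the Green's function of `d²/dz² - k²` with Dirichlet conditions:
integrating the Wronskian of `w` with `sinh (k s)` and with `sinh (k (1 - s))` gives
`k sinh k · w(z) = -(sinh (k(1-z)) ∫₀^z sinh (k s) g + sinh (k z) ∫_z^1 sinh (k(1-s)) g)`
for `g = kζ`. After Cauchy–Schwarz on both integrals, what remains is the elementary inequality
`sinh² b (sinh a cosh a - a) + sinh² a (sinh b cosh b - b) ≤ (5/4) a² sinh² (a + b)` at
`a = kz`, `b = k(1-z)`, which reduces to `eˣ - 1 - x ≤ (5/16) x² (cosh x + 1)`, proved by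
comparing second derivatives.
-/

open MeasureTheory Real

lemma le_of_hasDerivAt_le_of_nonneg {f g f' g' : ℝ → ℝ} (hf : ∀ x, HasDerivAt f (f' x) x)
    (hg : ∀ x, HasDerivAt g (g' x) x) (h₀ : f 0 ≤ g 0) (h' : ∀ x, 0 ≤ x → f' x ≤ g' x)
    {x : ℝ} (hx : 0 ≤ x) : f x ≤ g x :=
  image_le_of_deriv_right_le_deriv_boundary (fun y _ => (hf y).continuousAt.continuousWithinAt)
    (fun y _ => (hf y).hasDerivWithinAt) h₀ (fun y _ => (hg y).continuousAt.continuousWithinAt)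
    (fun y _ => (hg y).hasDerivWithinAt) (fun y hy => h' y hy.1) ⟨hx, le_rfl⟩

/-- Multiplied by `2 exp x`, this is a quadratic inequality in `exp x`; it suffices to bound
`exp x` by Taylor polynomials, from above on the range where the leading coefficient is negative. -/
lemma sixteen_mul_exp_le {x : ℝ} (hx : 0 ≤ x) :
    16 * exp x ≤ 5 * (x ^ 2 * cosh x + 4 * x * sinh x + 2 * cosh x + 2) := by
  set u := exp x
  have hu₀ : 0 < u := exp_pos x
  have hL : 1 + x + x ^ 2 / 2 ≤ u := quadratic_le_exp_of_nonneg hx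
  have hquadratic : 0 ≤ (5 * x ^ 2 + 20 * x - 22) * u ^ 2 + 20 * u + 5 * (x ^ 2 - 4 * x + 2) := by
    rcases le_or_gt (5 * x ^ 2 + 20 * x - 22) 0 with hA | hA
    · have hx₁ : x ≤ 1 := by nlinarith
      have hU : u ≤ 1 + x + x ^ 2 / 2 + 2 * x ^ 3 / 9 := by
        have h := exp_bound' hx hx₁ (n := 3) (by norm_num)
        norm_num [Finset.sum_range_succ, Nat.factorial] at h
        linarith
      have hsq : u ^ 2 ≤ (1 + x + x ^ 2 / 2 + 2 * x ^ 3 / 9) ^ 2 := by gcongr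
      nlinarith [mul_le_mul_of_nonpos_left hsq hA, mul_nonneg hx (sq_nonneg (x - 1/2)),
        mul_nonneg (mul_nonneg hx hx) (sq_nonneg (x - 1/2)), pow_nonneg hx 3, pow_nonneg hx 4,
        mul_nonneg hx (sub_nonneg.2 hx₁)]
    · have hsq : (1 + x + x ^ 2 / 2) ^ 2 ≤ u ^ 2 := by gcongr
      nlinarith [mul_le_mul_of_nonneg_left hsq hA.le, pow_nonneg hx 3, pow_nonneg hx 4]
  have hcosh : cosh x = (u + u⁻¹) / 2 := by rw [cosh_eq, exp_neg]
  have hsinh : sinh x = (u - u⁻¹) / 2 := by rw [sinh_eq, exp_neg]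
  rw [hcosh, hsinh, ← sub_nonneg]
  have hquot :
      5 * (x ^ 2 * ((u + u⁻¹) / 2) + 4 * x * ((u - u⁻¹) / 2) + 2 * ((u + u⁻¹) / 2) + 2) - 16 * u
      = ((5 * x ^ 2 + 20 * x - 22) * u ^ 2 + 20 * u + 5 * (x ^ 2 - 4 * x + 2)) / (2 * u) := by
    field_simp; ring
  rw [hquot]
  positivity

lemma exp_sub_one_sub_le {x : ℝ} (hx : 0 ≤ x) : exp x - 1 - x ≤ 5 / 16 * x ^ 2 * (cosh x + 1) := by
  have hg₂ (t : ℝ) : HasDerivAt (fun t => 5 / 16 * (2 * t * (cosh t + 1) + t ^ 2 * sinh t))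
      (5 / 16 * (t ^ 2 * cosh t + 4 * t * sinh t + 2 * cosh t + 2)) t := by
    have := ((((hasDerivAt_id t).const_mul 2).mul ((hasDerivAt_cosh t).add_const 1)).add
      ((hasDerivAt_pow 2 t).mul (hasDerivAt_sinh t))).const_mul (5 / 16)
    exact this.congr_deriv (by simp only [id_eq]; ring)
  have hg₁ (t : ℝ) : HasDerivAt (fun t => 5 / 16 * t ^ 2 * (cosh t + 1))
      (5 / 16 * (2 * t * (cosh t + 1) + t ^ 2 * sinh t)) t := by
    have := ((hasDerivAt_pow 2 t).mul ((hasDerivAt_cosh t).add_const 1)).const_mul (5 / 16)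
    exact (this.congr_deriv (by simp)).congr_of_eventuallyEq
      (.of_forall fun s => by simp only [Pi.mul_apply]; ring)
  have hf₁ (t : ℝ) : HasDerivAt (fun t => exp t - 1 - t) (exp t - 1) t :=
    ((hasDerivAt_exp t).sub_const 1).sub (hasDerivAt_id t)
  have hf₂ (t : ℝ) : HasDerivAt (fun t => exp t - 1) (exp t) t := (hasDerivAt_exp t).sub_const 1
  refine le_of_hasDerivAt_le_of_nonneg hf₁ hg₁ (by simp) (fun t ht => ?_) hx
  refine le_of_hasDerivAt_le_of_nonneg hf₂ hg₂ (by simp) (fun s hs => ?_) ht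
  linarith [sixteen_mul_exp_le hs]

lemma sinh_mul_cosh_sub_le_sinh_sq (b : ℝ) : sinh b * cosh b - b ≤ sinh b ^ 2 := by
  have h := add_one_le_exp (-2 * b)
  have e : sinh b * cosh b - sinh b ^ 2 = (1 - exp (-2 * b)) / 2 := by
    rw [sinh_eq, cosh_eq, show -2 * b = -b + -b by ring, exp_add, exp_neg]
    field_simp; ring
  linarith

lemma sinh_mul_cosh_sub_add_sinh_sq (a : ℝ) :
    sinh a * cosh a - a + sinh a ^ 2 = (exp (2 * a) - 1 - 2 * a) / 2 := by
  rw [sinh_eq, cosh_eq, two_mul, exp_add, exp_neg]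
  field_simp; ring

lemma sinh_mul_cosh_sub_add_sinh_sq_le (a : ℝ) (ha : 0 ≤ a) :
    sinh a * cosh a - a + sinh a ^ 2 ≤ 5 / 4 * a ^ 2 * cosh a ^ 2 := by
  have h := exp_sub_one_sub_le (by positivity : 0 ≤ 2 * a)
  rw [cosh_two_mul, cosh_sq a] at h
  rw [sinh_mul_cosh_sub_add_sinh_sq, cosh_sq a]
  nlinarith

lemma cosh_mul_sinh_le_sinh_add {a : ℝ} (ha : 0 ≤ a) (b : ℝ) :
    cosh a * sinh b ≤ sinh (a + b) := by
  rw [sinh_add]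
  have := mul_nonneg (sinh_nonneg_iff.2 ha) (cosh_pos b).le
  linarith

lemma sinh_sq_mul_add_sinh_sq_mul_le {a b : ℝ} (ha : 0 ≤ a) (hb : 0 ≤ b) :
    sinh b ^ 2 * (sinh a * cosh a - a) + sinh a ^ 2 * (sinh b * cosh b - b)
      ≤ 5 / 4 * a ^ 2 * sinh (a + b) ^ 2 := by
  have h₁ := mul_le_mul_of_nonneg_left (sinh_mul_cosh_sub_le_sinh_sq b) (sq_nonneg (sinh a))
  have h₂ := mul_le_mul_of_nonneg_left (sinh_mul_cosh_sub_add_sinh_sq_le a ha) (sq_nonneg (sinh b))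
  have h₃ : (cosh a * sinh b) ^ 2 ≤ sinh (a + b) ^ 2 :=
    pow_le_pow_left₀ (mul_nonneg (cosh_pos a).le (sinh_nonneg_iff.2 hb))
      (cosh_mul_sinh_le_sinh_add ha b) 2
  nlinarith [mul_le_mul_of_nonneg_left h₃ (by positivity : 0 ≤ 5 / 4 * a ^ 2)]

lemma integral_sq_nonneg_of_le {a b : ℝ} (hab : a ≤ b) (f : ℝ → ℝ) :
    0 ≤ ∫ s in a..b, f s ^ 2 :=
  intervalIntegral.integral_nonneg hab fun _ _ => sq_nonneg _

lemma sq_integral_mul_le {f g : ℝ → ℝ} {a b : ℝ} (hab : a ≤ b) (hf : Continuous f)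
    (hg : Continuous g) :
    (∫ s in a..b, f s * g s) ^ 2 ≤ (∫ s in a..b, f s ^ 2) * ∫ s in a..b, g s ^ 2 := by
  have hquad (t : ℝ) : 0 ≤ (∫ s in a..b, f s ^ 2) * (t * t) + 2 * (∫ s in a..b, f s * g s) * t
      + ∫ s in a..b, g s ^ 2 := by
    have hexp : (∫ s in a..b, (t * f s + g s) ^ 2) = (∫ s in a..b, f s ^ 2) * (t * t)
        + 2 * (∫ s in a..b, f s * g s) * t + ∫ s in a..b, g s ^ 2 := by
      have hi (h : ℝ → ℝ) (hh : Continuous h) : IntervalIntegrable h volume a b :=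
        hh.intervalIntegrable a b
      simp_rw [add_sq, mul_pow]
      rw [intervalIntegral.integral_add (hi _ (by fun_prop)) (hi _ (by fun_prop)),
        intervalIntegral.integral_add (hi _ (by fun_prop)) (hi _ (by fun_prop))]
      simp_rw [mul_assoc, intervalIntegral.integral_const_mul]
      ring_nf
    exact hexp ▸ integral_sq_nonneg_of_le hab _
  have := discrim_le_zero hquad
  rw [discrim] at this
  linarith

lemma add_sq_le_add_mul_add {x y p q r s : ℝ} (hp : 0 ≤ p) (hq : 0 ≤ q) (hr : 0 ≤ r)
    (hs : 0 ≤ s) (hx : x ^ 2 ≤ p * r) (hy : y ^ 2 ≤ q * s) : (x + y) ^ 2 ≤ (p + q) * (r + s) := by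
  have h : (2 * x * y) ^ 2 ≤ (p * s + q * r) ^ 2 := by
    nlinarith [mul_le_mul hx hy (sq_nonneg y) (mul_nonneg hp hr), sq_nonneg (p * s - q * r)]
  nlinarith [abs_le_of_sq_le_sq' h (by positivity), mul_nonneg hp hs, mul_nonneg hq hr]

lemma integral_mul_sub_eq_wronskian {φ φ' w : ℝ → ℝ} {k : ℝ} (hφ : ∀ s, HasDerivAt φ (φ' s) s)
    (hφ' : ∀ s, HasDerivAt φ' (k ^ 2 * φ s) s) (hw : ContDiff ℝ 2 w) (a b : ℝ) :
    ∫ s in a..b, φ s * (iteratedDeriv 2 w s - k ^ 2 * w s)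
      = (φ b * deriv w b - φ' b * w b) - (φ a * deriv w a - φ' a * w a) := by
  have hw₁ (s : ℝ) : HasDerivAt w (deriv w s) s :=
    (hw.differentiable (by norm_num) s).hasDerivAt
  have hw₂ (s : ℝ) : HasDerivAt (deriv w) (iteratedDeriv 2 w s) s := by
    simpa [iteratedDeriv_eq_iterate] using (hw.differentiable_deriv_two s).hasDerivAt
  have hφc : Continuous φ := continuous_iff_continuousAt.2 fun s => (hφ s).continuousAt
  refine intervalIntegral.integral_eq_sub_of_hasDerivAt
    (f := fun s => φ s * deriv w s - φ' s * w s) (fun s _ => ?_) ?_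
  · exact (((hφ s).mul (hw₂ s)).sub ((hφ' s).mul (hw₁ s))).congr_deriv (by ring)
  · exact (hφc.mul ((hw.continuous_iteratedDeriv 2 le_rfl).sub
      (continuous_const.mul hw.continuous))).intervalIntegrable a b

lemma integral_sinh_mul_sq {k : ℝ} (hk : k ≠ 0) (x : ℝ) :
    ∫ s in (0:ℝ)..x, sinh (k * s) ^ 2 = (sinh (k * x) * cosh (k * x) - k * x) / (2 * k) := by
  have hd (s : ℝ) : HasDerivAt (fun t => k * t) k s := by
    simpa using (hasDerivAt_id s).const_mul k
  rw [intervalIntegral.integral_eq_sub_of_hasDerivAt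
    (f := fun t => (sinh (k * t) * cosh (k * t) - k * t) / (2 * k)) (fun s _ => ?_)
    ((by fun_prop : Continuous fun s => sinh (k * s) ^ 2).intervalIntegrable 0 x)]
  · simp
  · refine ((((hd s).sinh.mul (hd s).cosh).sub (hd s)).div_const (2 * k)).congr_deriv ?_
    field_simp
    linear_combination cosh_sq (k * s)

lemma mul_sinh_mul_eq_neg_integral {k z : ℝ} {w g : ℝ → ℝ} (hw : ContDiff ℝ 2 w)
    (hw₀ : w 0 = 0) (hw₁ : w 1 = 0)
    (hrel : ∀ s ∈ Set.Icc (0:ℝ) 1, iteratedDeriv 2 w s - k ^ 2 * w s = g s)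
    (hz : z ∈ Set.Icc (0:ℝ) 1) :
    k * sinh k * w z = -(sinh (k * (1 - z)) * (∫ s in (0:ℝ)..z, sinh (k * s) * g s)
      + sinh (k * z) * ∫ s in z..1, sinh (k * (1 - s)) * g s) := by
  have hl (s : ℝ) : HasDerivAt (fun t => k * t) k s := by
    simpa using (hasDerivAt_id s).const_mul k
  have hr (s : ℝ) : HasDerivAt (fun t => k * (1 - t)) (-k) s := by
    simpa using ((hasDerivAt_id s).const_sub 1).const_mul k
  have e₀ : ∫ s in (0:ℝ)..z, sinh (k * s) * g s
      = sinh (k * z) * deriv w z - k * cosh (k * z) * w z := by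
    rw [intervalIntegral.integral_congr
      (g := fun s => sinh (k * s) * (iteratedDeriv 2 w s - k ^ 2 * w s)) fun s hs => ?_]
    · rw [integral_mul_sub_eq_wronskian (φ' := fun s => k * cosh (k * s))
        (fun s => (hl s).sinh.congr_deriv (mul_comm _ _))
        (fun s => ((hl s).cosh.const_mul k).congr_deriv (by ring)) hw]
      simp [hw₀]
    · rw [Set.uIcc_of_le hz.1] at hs
      simp only [hrel s ⟨hs.1, hs.2.trans hz.2⟩]
  have e₁ : ∫ s in z..1, sinh (k * (1 - s)) * g s
      = -(sinh (k * (1 - z)) * deriv w z) - k * cosh (k * (1 - z)) * w z := by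
    rw [intervalIntegral.integral_congr
      (g := fun s => sinh (k * (1 - s)) * (iteratedDeriv 2 w s - k ^ 2 * w s)) fun s hs => ?_]
    · rw [integral_mul_sub_eq_wronskian (φ' := fun s => -(k * cosh (k * (1 - s))))
        (fun s => (hr s).sinh.congr_deriv (by ring))
        (fun s => ((hr s).cosh.const_mul k).neg.congr_deriv (by ring)) hw]
      simp only [sub_self, mul_zero, sinh_zero, cosh_zero, hw₁]
      ring
    · rw [Set.uIcc_of_le hz.2] at hs
      simp only [hrel s ⟨hz.1.trans hs.1, hs.2⟩]
  have hsum : sinh k = sinh (k * (1 - z)) * cosh (k * z) + cosh (k * (1 - z)) * sinh (k * z) := by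
    rw [← sinh_add]; ring_nf
  rw [e₀, e₁, hsum]
  ring

lemma sinh_sq_mul_integral_add_sinh_sq_mul_integral_le {k z : ℝ} (hk : 0 < k)
    (hz : z ∈ Set.Icc (0:ℝ) 1) :
    sinh (k * (1 - z)) ^ 2 * (∫ s in (0:ℝ)..z, sinh (k * s) ^ 2)
      + sinh (k * z) ^ 2 * (∫ s in z..1, sinh (k * (1 - s)) ^ 2)
      ≤ 5 / 8 * k * z ^ 2 * sinh k ^ 2 := by
  have hreflect :
      ∫ s in z..1, sinh (k * (1 - s)) ^ 2 = ∫ s in (0:ℝ)..(1 - z), sinh (k * s) ^ 2 := by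
    simpa using intervalIntegral.integral_comp_sub_left (fun s => sinh (k * s) ^ 2) (1:ℝ)
      (a := z) (b := 1)
  have h := sinh_sq_mul_add_sinh_sq_mul_le (mul_nonneg hk.le hz.1)
    (mul_nonneg hk.le (sub_nonneg.2 hz.2))
  rw [show k * z + k * (1 - z) = k by ring] at h
  rw [hreflect, integral_sinh_mul_sq hk.ne', integral_sinh_mul_sq hk.ne', mul_div_assoc',
    mul_div_assoc', ← add_div, div_le_iff₀ (by positivity)]
  linarith

lemma sq_le_of_iteratedDeriv_sub_eq {k z : ℝ} (hk : 0 < k) {w g : ℝ → ℝ} (hw : ContDiff ℝ 2 w)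
    (hg : Continuous g) (hw₀ : w 0 = 0) (hw₁ : w 1 = 0)
    (hrel : ∀ s ∈ Set.Icc (0:ℝ) 1, iteratedDeriv 2 w s - k ^ 2 * w s = g s)
    (hz : z ∈ Set.Icc (0:ℝ) 1) :
    w z ^ 2 ≤ 5 / 8 * z ^ 2 / k * ∫ s in (0:ℝ)..1, g s ^ 2 := by
  have hnn₀ := integral_sq_nonneg_of_le hz.1
  have hnn₁ := integral_sq_nonneg_of_le hz.2
  have hsplit : (∫ s in (0:ℝ)..z, g s ^ 2) + ∫ s in z..1, g s ^ 2 = ∫ s in (0:ℝ)..1, g s ^ 2 :=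
    intervalIntegral.integral_add_adjacent_intervals ((hg.pow 2).intervalIntegrable _ _)
      ((hg.pow 2).intervalIntegrable _ _)
  have hcs₀ := sq_integral_mul_le hz.1 (by fun_prop : Continuous fun s => sinh (k * s)) hg
  have hcs₁ := sq_integral_mul_le hz.2 (by fun_prop : Continuous fun s => sinh (k * (1 - s))) hg
  have hgreen : (k * sinh k * w z) ^ 2
      ≤ (k * sinh k) ^ 2 * (5 / 8 * z ^ 2 / k * ∫ s in (0:ℝ)..1, g s ^ 2) := by
    rw [mul_sinh_mul_eq_neg_integral hw hw₀ hw₁ hrel hz, neg_sq, ← hsplit]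
    calc _ ≤ (sinh (k * (1 - z)) ^ 2 * (∫ s in (0:ℝ)..z, sinh (k * s) ^ 2)
          + sinh (k * z) ^ 2 * (∫ s in z..1, sinh (k * (1 - s)) ^ 2))
          * ((∫ s in (0:ℝ)..z, g s ^ 2) + ∫ s in z..1, g s ^ 2) := by
          refine add_sq_le_add_mul_add (mul_nonneg (sq_nonneg _) (hnn₀ _))
            (mul_nonneg (sq_nonneg _) (hnn₁ _)) (hnn₀ _) (hnn₁ _) ?_ ?_
          · rw [mul_pow, mul_assoc]; exact mul_le_mul_of_nonneg_left hcs₀ (sq_nonneg _)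
          · rw [mul_pow, mul_assoc]; exact mul_le_mul_of_nonneg_left hcs₁ (sq_nonneg _)
      _ ≤ 5 / 8 * k * z ^ 2 * sinh k ^ 2
          * ((∫ s in (0:ℝ)..z, g s ^ 2) + ∫ s in z..1, g s ^ 2) := by
          gcongr
          · exact add_nonneg (hnn₀ _) (hnn₁ _)
          · exact sinh_sq_mul_integral_add_sinh_sq_mul_integral_le hk hz
      _ = _ := by field_simp
  rw [mul_pow] at hgreen
  exact le_of_mul_le_mul_left hgreen (by have := sinh_pos_iff.2 hk; positivity)

local notation "c₁" => (3 ^ ((3:ℝ)/4) / 2 ^ ((3:ℝ)/2) : ℝ)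

lemma five_div_eight_le_c₁_sq : 5 / 8 ≤ c₁ ^ 2 := by
  have h : c₁ ^ 4 = 27 / 64 := by
    rw [div_pow, ← rpow_natCast, ← rpow_natCast (2 ^ _), ← rpow_mul (by norm_num),
      ← rpow_mul (by norm_num)]
    norm_num
  nlinarith [sq_nonneg (c₁ ^ 2 - 5 / 8)]

lemma abs_le_c₁_mul_of_sq_le {x M z : ℝ} (hM : 0 ≤ M) (hz : 0 ≤ z)
    (h : x ^ 2 ≤ 5 / 8 * M * z ^ 3) : |x| ≤ c₁ * M ^ ((1:ℝ)/2) * z ^ ((3:ℝ)/2) := by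
  refine abs_le_of_sq_le_sq' ?_ (by positivity) |>.2
  rw [mul_pow, mul_pow, ← rpow_natCast (M ^ _), ← rpow_natCast (z ^ _), ← rpow_mul hM,
    ← rpow_mul hz]
  norm_num
  nlinarith [five_div_eight_le_c₁_sq, mul_nonneg hM (pow_nonneg hz 3)]

lemma sq_le_mul_integral_deriv_sq {T : ℝ → ℝ} (hT : ContDiff ℝ 1 T) (hT₀ : T 0 = 0) {z : ℝ}
    (hz : z ∈ Set.Icc (0:ℝ) 1) : T z ^ 2 ≤ z * ∫ s in (0:ℝ)..1, deriv T s ^ 2 := by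
  have hT' : Continuous (deriv T) := hT.continuous_deriv le_rfl
  have hftc : ∫ s in (0:ℝ)..z, 1 * deriv T s = T z := by
    simpa [hT₀] using intervalIntegral.integral_deriv_eq_sub
      (fun s _ => hT.differentiable one_ne_zero s) (hT'.intervalIntegrable (μ := volume) 0 z)
  calc T z ^ 2 ≤ (∫ s in (0:ℝ)..z, (1:ℝ) ^ 2) * ∫ s in (0:ℝ)..z, deriv T s ^ 2 :=
        hftc ▸ sq_integral_mul_le hz.1 continuous_const hT'
    _ ≤ z * ∫ s in (0:ℝ)..1, deriv T s ^ 2 := by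
        simp only [one_pow, intervalIntegral.integral_const, sub_zero, smul_eq_mul, mul_one]
        gcongr
        · exact hz.1
        · exact intervalIntegral.integral_mono_interval le_rfl hz.1 hz.2
            (.of_forall fun s => sq_nonneg _) ((hT'.pow 2).intervalIntegrable (μ := volume) 0 1)

lemma abs_mul_le_mul_rpow_three_div_two {k z : ℝ} (hk : 0 < k) {w ζ T : ℝ → ℝ}
    (hw : ContDiff ℝ 2 w) (hζ : Continuous ζ) (hT : ContDiff ℝ 1 T) (hw₀ : w 0 = 0)
    (hw₁ : w 1 = 0) (hrel : ∀ s ∈ Set.Icc (0:ℝ) 1, iteratedDeriv 2 w s - k ^ 2 * w s = k * ζ s)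
    (hT₀ : T 0 = 0) (hz : z ∈ Set.Icc (0:ℝ) 1) :
    |w z * T z| ≤ c₁ * (k * (∫ s in (0:ℝ)..1, ζ s ^ 2) * ∫ s in (0:ℝ)..1, deriv T s ^ 2) ^ ((1:ℝ)/2)
      * z ^ ((3:ℝ)/2) := by
  have hnn := integral_sq_nonneg_of_le zero_le_one
  refine abs_le_c₁_mul_of_sq_le (by have := hnn ζ; have := hnn (deriv T); positivity) hz.1 ?_
  have hw := sq_le_of_iteratedDeriv_sub_eq (g := fun s => k * ζ s) hk hw (by fun_prop) hw₀ hw₁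
    hrel hz
  simp only [mul_pow, intervalIntegral.integral_const_mul] at hw
  calc (w z * T z) ^ 2 = w z ^ 2 * T z ^ 2 := mul_pow _ _ _
    _ ≤ 5 / 8 * z ^ 2 / k * (k ^ 2 * ∫ s in (0:ℝ)..1, ζ s ^ 2)
        * (z * ∫ s in (0:ℝ)..1, deriv T s ^ 2) :=
        mul_le_mul hw (sq_le_mul_integral_deriv_sq hT hT₀ hz) (sq_nonneg _)
          (by have := hnn ζ; positivity)
    _ = _ := by field_simp

theorem lower_boundary_layer_estimate_stress_free_general
    (k δ : ℝ) (hk : 0 < k) (hδ : δ ∈ Set.Ioc (0:ℝ) 1)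
    (w ζ T : ℝ → ℝ) (hw : ContDiff ℝ 2 w) (hζ : Continuous ζ) (hT : ContDiff ℝ 1 T)
    (hw0 : w 0 = 0) (hw1 : w 1 = 0)
    (hrel : ∀ z ∈ Set.Icc (0:ℝ) 1, iteratedDeriv 2 w z - k^2 * w z = k * ζ z)
    (hT0 : T 0 = 0) :
    (∫ z in (0:ℝ)..δ, |w z * T z|) ≤
      (2 * (3 ^ ((3:ℝ)/4) / 2 ^ ((3:ℝ)/2)) / 5) * k ^ ((1:ℝ)/2) * δ ^ ((5:ℝ)/2) *
        (∫ z in (0:ℝ)..1, (ζ z)^2) ^ ((1:ℝ)/2) *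
        (∫ z in (0:ℝ)..1, (deriv T z)^2) ^ ((1:ℝ)/2) := by
  obtain ⟨hδ₀, hδ₁⟩ := hδ
  have hnn := integral_sq_nonneg_of_le zero_le_one
  calc (∫ z in (0:ℝ)..δ, |w z * T z|)
      ≤ ∫ z in (0:ℝ)..δ,
          c₁ * (k * (∫ s in (0:ℝ)..1, ζ s ^ 2) * ∫ s in (0:ℝ)..1, deriv T s ^ 2) ^ ((1:ℝ)/2)
            * z ^ ((3:ℝ)/2) :=
        intervalIntegral.integral_mono_on hδ₀.le
          ((hw.continuous.mul hT.continuous).abs.intervalIntegrable _ _)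
          ((continuous_const.mul
            (continuous_id.rpow_const fun _ => Or.inr (by norm_num))).intervalIntegrable _ _)
          fun z hz => abs_mul_le_mul_rpow_three_div_two hk hw hζ hT hw0 hw1 hrel hT0
            ⟨hz.1, hz.2.trans hδ₁⟩
    _ = _ := by
        rw [intervalIntegral.integral_const_mul, integral_rpow (by norm_num),
          mul_rpow (mul_nonneg hk.le (hnn ζ)) (hnn (deriv T)), mul_rpow hk.le (hnn ζ)]
        norm_num
        ring

/-- Lower boundary-layer estimate in the stress-free proof: for `δ ∈ (0,1]`, with the
pseudo-vorticity relation `w'' - k²w = kζ`, `w(0) = w(1) = ζ(0) = ζ(1) = 0` and `T(0) = 0`,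
`∫₀^δ |w T| ≤ (2c₁/5) k^{1/2} δ^{5/2} ‖ζ‖₂ ‖T'‖₂` with `c₁ = 3^{3/4}/2^{3/2}`. -/
theorem lower_boundary_layer_estimate_stress_free
    (k δ : ℝ) (hk : 0 < k) (hδ : δ ∈ Set.Ioc (0:ℝ) 1)
    (w ζ T : ℝ → ℝ) (hw : ContDiff ℝ 2 w) (hζ : Continuous ζ) (hT : ContDiff ℝ 1 T)
    (hw0 : w 0 = 0) (hw1 : w 1 = 0) (hζ0 : ζ 0 = 0) (hζ1 : ζ 1 = 0)
    (hrel : ∀ z ∈ Set.Icc (0:ℝ) 1, iteratedDeriv 2 w z - k^2 * w z = k * ζ z)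
    (hT0 : T 0 = 0) :
    (∫ z in (0:ℝ)..δ, |w z * T z|) ≤
      (2 * (3 ^ ((3:ℝ)/4) / 2 ^ ((3:ℝ)/2)) / 5) * k ^ ((1:ℝ)/2) * δ ^ ((5:ℝ)/2) *
        (∫ z in (0:ℝ)..1, (ζ z)^2) ^ ((1:ℝ)/2) *
        (∫ z in (0:ℝ)..1, (deriv T z)^2) ^ ((1:ℝ)/2) :=
  lower_boundary_layer_estimate_stress_free_general k δ hk hδ w ζ T hw hζ hT hw0 hw1 hrel hT0
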